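/- Let g₂, g₄ ∈ ℝ with |g₂| < 1 + g₄. Define v = v_F √((1+g₄)² - g₂²) and K = √((1 + g₄ - g₂)/(1 + g₄ + g₂)) for v_F > 0. Then K v = v_F (1 + g₄ - g₂). In particular, if w_± = L μ̃_± / (2(1 + g₄ - g₂)) with μ̃_± = (μ_± - μ₀)/(π v_F), then (K v / L)(w_+ - w_-) = (μ_+ - μ_-)/(2π), so the conductance I/(μ_+ - μ_-) = 1/(2π) is independent of g₂ and g₄. -/
import Mathlib


open Real in
/-- Universality of the conductance for general g₂- and g₄-interactions:
K v = v_F(1 + g₄ - g₂) and (Kv/L)(w₊ - w₋) = (μ₊ - μ₋)/(2π). -/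
theorem stmt_16 (g2 g4 vF L μ0 μp μm : ℝ) (hvF : vF > 0) (hL : L > 0)
    (hg : |g2| < 1 + g4)
    (v K wp wm : ℝ)
    (hv : v = vF * Real.sqrt ((1 + g4) ^ 2 - g2 ^ 2))
    (hK : K = Real.sqrt ((1 + g4 - g2) / (1 + g4 + g2)))
    (hwp : wp = L * ((μp - μ0) / (π * vF)) / (2 * (1 + g4 - g2)))
    (hwm : wm = L * ((μm - μ0) / (π * vF)) / (2 * (1 + g4 - g2))) :
    K * v = vF * (1 + g4 - g2) ∧
    (K * v / L) * (wp - wm) = (μp - μm) / (2 * π) := by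
  obtain ⟨h1, h2⟩ := abs_lt.mp hg
  have hm : (0:ℝ) < 1 + g4 - g2 := by linarith
  have hp : (0:ℝ) < 1 + g4 + g2 := by linarith
  have hpi : (0:ℝ) < π := Real.pi_pos
  have hKv : K * v = vF * (1 + g4 - g2) := by
    have hsq : (1 + g4) ^ 2 - g2 ^ 2 = (1 + g4 - g2) * (1 + g4 + g2) := by ring
    rw [hK, hv, hsq]
    rw [show Real.sqrt ((1 + g4 - g2) / (1 + g4 + g2)) * (vF * Real.sqrt ((1 + g4 - g2) * (1 + g4 + g2))) = vF * (Real.sqrt ((1 + g4 - g2) / (1 + g4 + g2)) * Real.sqrt ((1 + g4 - g2) * (1 + g4 + g2))) from by ring]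
    rw [← Real.sqrt_mul (by positivity)]
    rw [show (1 + g4 - g2) / (1 + g4 + g2) * ((1 + g4 - g2) * (1 + g4 + g2)) = (1 + g4 - g2) ^ 2 from by field_simp]
    rw [Real.sqrt_sq hm.le]
  refine ⟨hKv, ?_⟩
  rw [hKv, hwp, hwm]
  field_simp
  ring
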